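/- arXiv:1211.2102 — 2 statements merged into one kernel-verified Lean document; each statement's English description precedes it below -/
import Mathlib

section
/- Let ȳ be the vector field ȳ(t,x) = (g(t,r²,x₃)x₁, g(t,r²,x₃)x₂, h(t,r²,x₃)) with r² = x₁²+x₂², and define p̂(t,w,x₃) = (1/2)∫_w^{r₁²} (∂_t g − (4w'∂²_{ww}g + 8∂_w g + ∂²_{x₃x₃}g) + 2w' g ∂_w g + g² + h ∂_{x₃}g)(t,w',x₃) dw' and p̄(t,x) = p̂(t,r²,x₃). Then the first component satisfies ∂_t ȳ¹ − Δȳ¹ + (ȳ·∇)ȳ¹ + ∂_{x₁}p̄ = 0 on ℝ⁴. -/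
noncomputable def pvec (v : ℝ × ℝ × ℝ) (F : ℝ × ℝ × ℝ → ℝ) (p : ℝ × ℝ × ℝ) : ℝ :=
  fderiv ℝ F p v

lemma pvec_contDiff (v : ℝ × ℝ × ℝ) {F : ℝ × ℝ × ℝ → ℝ} (hF : ContDiff ℝ (⊤ : ℕ∞) F) :
    ContDiff ℝ (⊤ : ℕ∞) (pvec v F) :=
  (hF.fderiv_right (by simp)).clm_apply contDiff_const

lemma hasDerivAt_line {F : ℝ × ℝ × ℝ → ℝ} (hF : ContDiff ℝ (⊤ : ℕ∞) F)
    {γ : ℝ → ℝ × ℝ × ℝ} {v : ℝ × ℝ × ℝ} {s : ℝ} (hγ : HasDerivAt γ v s) :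
    HasDerivAt (fun u => F (γ u)) (fderiv ℝ F (γ s) v) s :=
  (hF.differentiable (by simp) (γ s)).hasFDerivAt.comp_hasDerivAt s hγ

lemma hasDerivAt_c1 {F : ℝ × ℝ × ℝ → ℝ} (hF : ContDiff ℝ (⊤ : ℕ∞) F) (t w x₃ : ℝ) :
    HasDerivAt (fun u => F (u, w, x₃)) (pvec (1,0,0) F (t, w, x₃)) t := by
  have hγ : HasDerivAt (fun u : ℝ => ((u, w, x₃) : ℝ × ℝ × ℝ)) (1, 0, 0) t :=
    HasDerivAt.prodMk (hasDerivAt_id t) (hasDerivAt_const t ((w, x₃) : ℝ × ℝ))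
  exact hasDerivAt_line hF hγ

lemma hasDerivAt_c3 {F : ℝ × ℝ × ℝ → ℝ} (hF : ContDiff ℝ (⊤ : ℕ∞) F) (t w x₃ : ℝ) :
    HasDerivAt (fun u => F (t, w, u)) (pvec (0,0,1) F (t, w, x₃)) x₃ := by
  have hγ : HasDerivAt (fun u : ℝ => ((t, w, u) : ℝ × ℝ × ℝ)) (0, 0, 1) x₃ :=
    HasDerivAt.prodMk (hasDerivAt_const x₃ t) (HasDerivAt.prodMk (hasDerivAt_const x₃ w) (hasDerivAt_id x₃))
  exact hasDerivAt_line hF hγ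

lemma hasDerivAt_c2 {F : ℝ × ℝ × ℝ → ℝ} (hF : ContDiff ℝ (⊤ : ℕ∞) F)
    {φ : ℝ → ℝ} {φ' s : ℝ} (hφ : HasDerivAt φ φ' s) (t x₃ : ℝ) :
    HasDerivAt (fun u => F (t, φ u, x₃)) (pvec (0,1,0) F (t, φ s, x₃) * φ') s := by
  have hγ : HasDerivAt (fun u : ℝ => ((t, φ u, x₃) : ℝ × ℝ × ℝ)) (0, φ', 0) s :=
    HasDerivAt.prodMk (hasDerivAt_const s t) (HasDerivAt.prodMk hφ (hasDerivAt_const s x₃))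
  have h := hasDerivAt_line hF hγ
  have hv : ((0:ℝ), φ', (0:ℝ)) = φ' • ((0:ℝ), (1:ℝ), (0:ℝ)) := by
    simp [Prod.ext_iff]
  rw [hv, (fderiv ℝ F ((t, φ s, x₃) : ℝ × ℝ × ℝ)).map_smul, smul_eq_mul] at h
  simpa [pvec, mul_comm] using h

noncomputable def uncurry3 (f : ℝ → ℝ → ℝ → ℝ) : ℝ × ℝ × ℝ → ℝ :=
  fun p => f p.1 p.2.1 p.2.2

noncomputable def integrandPhi (G H : ℝ × ℝ × ℝ → ℝ) (p : ℝ × ℝ × ℝ) : ℝ :=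
  pvec (1,0,0) G p
    - (4 * p.2.1 * pvec (0,1,0) (pvec (0,1,0) G) p + 8 * pvec (0,1,0) G p
        + pvec (0,0,1) (pvec (0,0,1) G) p)
    + 2 * p.2.1 * G p * pvec (0,1,0) G p + (G p) ^ 2 + H p * pvec (0,0,1) G p

lemma integrandPhi_continuous {G H : ℝ × ℝ × ℝ → ℝ}
    (hG : ContDiff ℝ (⊤ : ℕ∞) G) (hH : ContDiff ℝ (⊤ : ℕ∞) H) :
    Continuous (integrandPhi G H) := by
  have c21 : Continuous fun p : ℝ × ℝ × ℝ => p.2.1 := (continuous_fst.comp continuous_snd)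
  have h1 := (pvec_contDiff (1,0,0) hG).continuous
  have h2 := (pvec_contDiff (0,1,0) hG).continuous
  have h3 := (pvec_contDiff (0,0,1) hG).continuous
  have h22 := (pvec_contDiff (0,1,0) (pvec_contDiff (0,1,0) hG)).continuous
  have h33 := (pvec_contDiff (0,0,1) (pvec_contDiff (0,0,1) hG)).continuous
  have hGc := hG.continuous
  have hHc := hH.continuous
  unfold integrandPhi
  exact ((((h1.sub ((((continuous_const.mul c21).mul h22).add
      (continuous_const.mul h2)).add h33)).add
      (((continuous_const.mul c21).mul hGc).mul h2)).add (hGc.pow 2)).add (hHc.mul h3))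
/-- Partial derivative in `t` of a function of (t,x₁,x₂,x₃). -/
noncomputable def pdT (f : ℝ → ℝ → ℝ → ℝ → ℝ) (t x₁ x₂ x₃ : ℝ) : ℝ :=
  deriv (fun s => f s x₁ x₂ x₃) t

/-- Partial derivative in `x₁`. -/
noncomputable def pd1 (f : ℝ → ℝ → ℝ → ℝ → ℝ) (t x₁ x₂ x₃ : ℝ) : ℝ :=
  deriv (fun s => f t s x₂ x₃) x₁

/-- Partial derivative in `x₂`. -/
noncomputable def pd2 (f : ℝ → ℝ → ℝ → ℝ → ℝ) (t x₁ x₂ x₃ : ℝ) : ℝ :=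
  deriv (fun s => f t x₁ s x₃) x₂

/-- Partial derivative in `x₃`. -/
noncomputable def pd3 (f : ℝ → ℝ → ℝ → ℝ → ℝ) (t x₁ x₂ x₃ : ℝ) : ℝ :=
  deriv (fun s => f t x₁ x₂ s) x₃

/-- Partial derivative in `t` of a function of (t,w,x₃). -/
noncomputable def qdT (f : ℝ → ℝ → ℝ → ℝ) (t w x₃ : ℝ) : ℝ :=
  deriv (fun s => f s w x₃) t

/-- Partial derivative in `w` of a function of (t,w,x₃). -/
noncomputable def qdW (f : ℝ → ℝ → ℝ → ℝ) (t w x₃ : ℝ) : ℝ :=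
  deriv (fun s => f t s x₃) w

/-- Partial derivative in `x₃` of a function of (t,w,x₃). -/
noncomputable def qd3 (f : ℝ → ℝ → ℝ → ℝ) (t w x₃ : ℝ) : ℝ :=
  deriv (fun s => f t w s) x₃

/-- For ȳ = (g(t,r²,x₃)x₁, g(t,r²,x₃)x₂, h(t,r²,x₃)) and the explicit pressure
p̄(t,x) = p̂(t,r²,x₃) built from an integral in w, the first component satisfies
∂_t ȳ¹ − Δȳ¹ + (ȳ·∇)ȳ¹ + ∂_{x₁}p̄ = 0. -/
theorem stmt_13 (g h : ℝ → ℝ → ℝ → ℝ)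
    (hg : ContDiff ℝ (⊤ : ℕ∞) fun p : ℝ × ℝ × ℝ => g p.1 p.2.1 p.2.2)
    (hh : ContDiff ℝ (⊤ : ℕ∞) fun p : ℝ × ℝ × ℝ => h p.1 p.2.1 p.2.2)
    (r₁ : ℝ) (hr₁ : 0 < r₁)
    (y1 y2 y3 : ℝ → ℝ → ℝ → ℝ → ℝ)
    (hy1 : ∀ t x₁ x₂ x₃, y1 t x₁ x₂ x₃ = g t (x₁ ^ 2 + x₂ ^ 2) x₃ * x₁)
    (hy2 : ∀ t x₁ x₂ x₃, y2 t x₁ x₂ x₃ = g t (x₁ ^ 2 + x₂ ^ 2) x₃ * x₂)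
    (hy3 : ∀ t x₁ x₂ x₃, y3 t x₁ x₂ x₃ = h t (x₁ ^ 2 + x₂ ^ 2) x₃)
    (phat : ℝ → ℝ → ℝ → ℝ)
    (hphat : ∀ t w x₃, phat t w x₃ =
      (1 / 2) * ∫ w' in w..(r₁ ^ 2),
        (qdT g t w' x₃
          - (4 * w' * qdW (fun t' w'' x₃' => qdW g t' w'' x₃') t w' x₃
              + 8 * qdW g t w' x₃
              + qd3 (fun t' w'' x₃' => qd3 g t' w'' x₃') t w' x₃)
          + 2 * w' * g t w' x₃ * qdW g t w' x₃
          + (g t w' x₃) ^ 2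
          + h t w' x₃ * qd3 g t w' x₃))
    (pbar : ℝ → ℝ → ℝ → ℝ → ℝ)
    (hpbar : ∀ t x₁ x₂ x₃, pbar t x₁ x₂ x₃ = phat t (x₁ ^ 2 + x₂ ^ 2) x₃) :
    ∀ t x₁ x₂ x₃ : ℝ,
      pdT y1 t x₁ x₂ x₃
        - (pd1 (pd1 y1) t x₁ x₂ x₃ + pd2 (pd2 y1) t x₁ x₂ x₃
            + pd3 (pd3 y1) t x₁ x₂ x₃)
        + (y1 t x₁ x₂ x₃ * pd1 y1 t x₁ x₂ x₃
            + y2 t x₁ x₂ x₃ * pd2 y1 t x₁ x₂ x₃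
            + y3 t x₁ x₂ x₃ * pd3 y1 t x₁ x₂ x₃)
        + pd1 pbar t x₁ x₂ x₃ = 0 := by
  intro t x₁ x₂ x₃
  have hG : ContDiff ℝ (⊤ : ℕ∞) (uncurry3 g) := hg
  have hH : ContDiff ℝ (⊤ : ℕ∞) (uncurry3 h) := hh
  have hFw : ContDiff ℝ (⊤ : ℕ∞) (pvec (0,1,0) (uncurry3 g)) := pvec_contDiff _ hG
  have hF3 : ContDiff ℝ (⊤ : ℕ∞) (pvec (0,0,1) (uncurry3 g)) := pvec_contDiff _ hG
  have hqT : ∀ a b c : ℝ, qdT g a b c = pvec (1,0,0) (uncurry3 g) (a,b,c) := fun a b c =>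
    (hasDerivAt_c1 hG a b c).deriv
  have hq3 : ∀ a b c : ℝ, qd3 g a b c = pvec (0,0,1) (uncurry3 g) (a,b,c) := fun a b c =>
    (hasDerivAt_c3 hG a b c).deriv
  have hqW : ∀ a b c : ℝ, qdW g a b c = pvec (0,1,0) (uncurry3 g) (a,b,c) := fun a b c => by
    exact (by simpa using (hasDerivAt_c2 hG (hasDerivAt_id b) a c).deriv :
      deriv (fun u => uncurry3 g (a, u, c)) b = _)
  have hqWW : ∀ a b c : ℝ, qdW (fun t' w'' x₃' => qdW g t' w'' x₃') a b c
      = pvec (0,1,0) (pvec (0,1,0) (uncurry3 g)) (a,b,c) := by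
    intro a b c
    have h0 : (fun s => qdW g a s c) = fun s => pvec (0,1,0) (uncurry3 g) (a,s,c) :=
      funext fun s => hqW a s c
    show deriv (fun s => qdW g a s c) b = _
    rw [h0]
    simpa using (hasDerivAt_c2 hFw (hasDerivAt_id b) a c).deriv
  have hq33 : ∀ a b c : ℝ, qd3 (fun t' w'' x₃' => qd3 g t' w'' x₃') a b c
      = pvec (0,0,1) (pvec (0,0,1) (uncurry3 g)) (a,b,c) := by
    intro a b c
    have h0 : (fun s => qd3 g a b s) = fun s => pvec (0,0,1) (uncurry3 g) (a,b,s) :=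
      funext fun s => hq3 a b s
    show deriv (fun s => qd3 g a b s) c = _
    rw [h0]
    exact (hasDerivAt_c3 hF3 a b c).deriv
  have hphat' : ∀ a u c : ℝ, phat a u c
      = (1/2) * ∫ w' in u..(r₁^2), integrandPhi (uncurry3 g) (uncurry3 h) (a, w', c) := by
    intro a u c
    rw [hphat]
    congr 1
    refine intervalIntegral.integral_congr fun x hx => ?_
    simp only [hqWW, hq33]
    simp [hqT, hqW, hq3, integrandPhi, uncurry3]
  have hslice : Continuous (fun x => integrandPhi (uncurry3 g) (uncurry3 h) (t, x, x₃)) :=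
    (integrandPhi_continuous hG hH).comp
      (continuous_const.prodMk (continuous_id.prodMk continuous_const))
  have hphatD : ∀ u : ℝ, HasDerivAt (fun v => phat t v x₃)
      ((1/2) * -(integrandPhi (uncurry3 g) (uncurry3 h) (t, u, x₃))) u := by
    intro u
    have hI := intervalIntegral.integral_hasDerivAt_left
      (hslice.intervalIntegrable u (r₁^2))
      (hslice.stronglyMeasurableAtFilter _ _) hslice.continuousAt
    have heq : (fun v => phat t v x₃)
        = fun v => (1/2) * ∫ x in v..(r₁^2), integrandPhi (uncurry3 g) (uncurry3 h) (t, x, x₃) :=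
      funext fun v => hphat' t v x₃
    rw [heq]
    exact hI.const_mul (1/2)
  have hsq : ∀ a : ℝ, HasDerivAt (fun s : ℝ => s^2 + x₂^2) (2*a) a := fun a => by
    simpa using (hasDerivAt_pow 2 a).add_const (x₂^2)
  have hsq2 : ∀ a : ℝ, HasDerivAt (fun s : ℝ => x₁^2 + s^2) (2*a) a := fun a => by
    simpa using (hasDerivAt_pow 2 a).const_add (x₁^2)
  have hB1 : HasDerivAt (fun a : ℝ => 2*a) 2 x₁ := by
    simpa using (hasDerivAt_id x₁).const_mul (2:ℝ)
  have hB2 : HasDerivAt (fun a : ℝ => 2*a) 2 x₂ := by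
    simpa using (hasDerivAt_id x₂).const_mul (2:ℝ)
  have ET : pdT y1 t x₁ x₂ x₃ = pvec (1,0,0) (uncurry3 g) (t, x₁^2+x₂^2, x₃) * x₁ := by
    have h0 : (fun s => y1 s x₁ x₂ x₃) = fun s => g s (x₁^2+x₂^2) x₃ * x₁ :=
      funext fun s => hy1 s x₁ x₂ x₃
    show deriv (fun s => y1 s x₁ x₂ x₃) t = _
    rw [h0]
    exact ((hasDerivAt_c1 hG t (x₁^2+x₂^2) x₃).mul_const x₁).deriv
  have hD1 : ∀ a : ℝ, pd1 y1 t a x₂ x₃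
      = pvec (0,1,0) (uncurry3 g) (t, a^2+x₂^2, x₃) * (2*a) * a
        + uncurry3 g (t, a^2+x₂^2, x₃) * 1 := by
    intro a
    have h0 : (fun s => y1 t s x₂ x₃) = fun s => g t (s^2+x₂^2) x₃ * s :=
      funext fun s => hy1 t s x₂ x₃
    show deriv (fun s => y1 t s x₂ x₃) a = _
    rw [h0]
    exact ((hasDerivAt_c2 hG (hsq a) t x₃).mul (hasDerivAt_id a)).deriv
  have E11 : pd1 (pd1 y1) t x₁ x₂ x₃
      = (pvec (0,1,0) (pvec (0,1,0) (uncurry3 g)) (t, x₁^2+x₂^2, x₃) * (2*x₁) * (2*x₁)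
            + pvec (0,1,0) (uncurry3 g) (t, x₁^2+x₂^2, x₃) * 2) * x₁
          + pvec (0,1,0) (uncurry3 g) (t, x₁^2+x₂^2, x₃) * (2*x₁) * 1
        + pvec (0,1,0) (uncurry3 g) (t, x₁^2+x₂^2, x₃) * (2*x₁) * 1 := by
    have h0 : (fun s => pd1 y1 t s x₂ x₃)
        = fun a => pvec (0,1,0) (uncurry3 g) (t, a^2+x₂^2, x₃) * (2*a) * a
            + uncurry3 g (t, a^2+x₂^2, x₃) * 1 :=
      funext fun a => hD1 a
    show deriv (fun s => pd1 y1 t s x₂ x₃) x₁ = _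
    rw [h0]
    exact ((((hasDerivAt_c2 hFw (hsq x₁) t x₃).mul hB1).mul (hasDerivAt_id x₁)).add
      ((hasDerivAt_c2 hG (hsq x₁) t x₃).mul_const 1)).deriv
  have hD2 : ∀ a : ℝ, pd2 y1 t x₁ a x₃
      = pvec (0,1,0) (uncurry3 g) (t, x₁^2+a^2, x₃) * (2*a) * x₁ := by
    intro a
    have h0 : (fun s => y1 t x₁ s x₃) = fun s => g t (x₁^2+s^2) x₃ * x₁ :=
      funext fun s => hy1 t x₁ s x₃
    show deriv (fun s => y1 t x₁ s x₃) a = _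
    rw [h0]
    exact ((hasDerivAt_c2 hG (hsq2 a) t x₃).mul_const x₁).deriv
  have E22 : pd2 (pd2 y1) t x₁ x₂ x₃
      = (pvec (0,1,0) (pvec (0,1,0) (uncurry3 g)) (t, x₁^2+x₂^2, x₃) * (2*x₂) * (2*x₂)
          + pvec (0,1,0) (uncurry3 g) (t, x₁^2+x₂^2, x₃) * 2) * x₁ := by
    have h0 : (fun s => pd2 y1 t x₁ s x₃)
        = fun a => pvec (0,1,0) (uncurry3 g) (t, x₁^2+a^2, x₃) * (2*a) * x₁ :=
      funext fun a => hD2 a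
    show deriv (fun s => pd2 y1 t x₁ s x₃) x₂ = _
    rw [h0]
    exact (((hasDerivAt_c2 hFw (hsq2 x₂) t x₃).mul hB2).mul_const x₁).deriv
  have hD3 : ∀ a : ℝ, pd3 y1 t x₁ x₂ a
      = pvec (0,0,1) (uncurry3 g) (t, x₁^2+x₂^2, a) * x₁ := by
    intro a
    have h0 : (fun s => y1 t x₁ x₂ s) = fun s => g t (x₁^2+x₂^2) s * x₁ :=
      funext fun s => hy1 t x₁ x₂ s
    show deriv (fun s => y1 t x₁ x₂ s) a = _
    rw [h0]
    exact ((hasDerivAt_c3 hG t (x₁^2+x₂^2) a).mul_const x₁).deriv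
  have E33 : pd3 (pd3 y1) t x₁ x₂ x₃
      = pvec (0,0,1) (pvec (0,0,1) (uncurry3 g)) (t, x₁^2+x₂^2, x₃) * x₁ := by
    have h0 : (fun s => pd3 y1 t x₁ x₂ s)
        = fun a => pvec (0,0,1) (uncurry3 g) (t, x₁^2+x₂^2, a) * x₁ :=
      funext fun a => hD3 a
    show deriv (fun s => pd3 y1 t x₁ x₂ s) x₃ = _
    rw [h0]
    exact ((hasDerivAt_c3 hF3 t (x₁^2+x₂^2) x₃).mul_const x₁).deriv
  have Ep : pd1 pbar t x₁ x₂ x₃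
      = ((1/2) * -(integrandPhi (uncurry3 g) (uncurry3 h) (t, x₁^2+x₂^2, x₃))) * (2*x₁) := by
    have h0 : (fun s => pbar t s x₂ x₃) = fun s => phat t (s^2+x₂^2) x₃ :=
      funext fun s => hpbar t s x₂ x₃
    show deriv (fun s => pbar t s x₂ x₃) x₁ = _
    rw [h0]
    exact ((hphatD (x₁^2+x₂^2)).comp x₁ (hsq x₁)).deriv
  have hgv : g t (x₁^2+x₂^2) x₃ = uncurry3 g (t, x₁^2+x₂^2, x₃) := rfl
  have hhv : h t (x₁^2+x₂^2) x₃ = uncurry3 h (t, x₁^2+x₂^2, x₃) := rfl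
  rw [ET, E11, E22, E33, Ep, hy1, hy2, hy3, hD1 x₁, hD2 x₂, hD3 x₃, hgv, hhv]
  simp only [integrandPhi]
  ring
end

section
/- Let Q ⊆ ℝ⁴ and let ȳ ∈ C^∞(Q)³. Define, for smooth (z,π) with z = (z¹,z²), the operator L₀*(z,π) whose components are: (−∂_t z^i − Δz^i − (ȳ·∇)z^i + ∂_{x_i}ȳ¹ z¹ + ∂_{x_i}ȳ² z² − ∂_{x_i}π) for i = 1,2, (∂_{x₃}ȳ¹ z¹ + ∂_{x₃}ȳ² z² − ∂_{x₃}π), and (−∂_{x₁}z¹ − ∂_{x₂}z²). For arbitrary F₁, F₂ ∈ C^∞(ℝ), set z¹(t,x) = F₁(t), z²(t,x) = F₂(t), π(t,x) = −F₁'(t)x₁ − F₂'(t)x₂ + F₁(t)ȳ¹(t,x) + F₂(t)ȳ²(t,x). Then L₀*(z,π) = 0, while (z¹,z²) ≠ (0,0) whenever (F₁,F₂) ≠ (0,0). -/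
lemma sd1 (f : ℝ → ℝ → ℝ → ℝ → ℝ)
    (hf : ContDiff ℝ (⊤ : ℕ∞) fun p : ℝ × ℝ × ℝ × ℝ => f p.1 p.2.1 p.2.2.1 p.2.2.2)
    (t x₁ x₂ x₃ : ℝ) : DifferentiableAt ℝ (fun s => f t s x₂ x₃) x₁ :=
  ((hf.differentiable (by simp)) (t, x₁, x₂, x₃)).comp (g := fun p : ℝ × ℝ × ℝ × ℝ => f p.1 p.2.1 p.2.2.1 p.2.2.2)
    (f := fun s => (t, s, x₂, x₃)) x₁
    ((differentiableAt_const t).prodMk (differentiableAt_id.prodMk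
      ((differentiableAt_const x₂).prodMk (differentiableAt_const x₃))))

lemma sd2 (f : ℝ → ℝ → ℝ → ℝ → ℝ)
    (hf : ContDiff ℝ (⊤ : ℕ∞) fun p : ℝ × ℝ × ℝ × ℝ => f p.1 p.2.1 p.2.2.1 p.2.2.2)
    (t x₁ x₂ x₃ : ℝ) : DifferentiableAt ℝ (fun s => f t x₁ s x₃) x₂ :=
  ((hf.differentiable (by simp)) (t, x₁, x₂, x₃)).comp (g := fun p : ℝ × ℝ × ℝ × ℝ => f p.1 p.2.1 p.2.2.1 p.2.2.2)
    (f := fun s => (t, x₁, s, x₃)) x₂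
    ((differentiableAt_const t).prodMk ((differentiableAt_const x₁).prodMk
      (differentiableAt_id.prodMk (differentiableAt_const x₃))))

lemma sd3 (f : ℝ → ℝ → ℝ → ℝ → ℝ)
    (hf : ContDiff ℝ (⊤ : ℕ∞) fun p : ℝ × ℝ × ℝ × ℝ => f p.1 p.2.1 p.2.2.1 p.2.2.2)
    (t x₁ x₂ x₃ : ℝ) : DifferentiableAt ℝ (fun s => f t x₁ x₂ s) x₃ :=
  ((hf.differentiable (by simp)) (t, x₁, x₂, x₃)).comp (g := fun p : ℝ × ℝ × ℝ × ℝ => f p.1 p.2.1 p.2.2.1 p.2.2.2)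
    (f := fun s => (t, x₁, x₂, s)) x₃
    ((differentiableAt_const t).prodMk ((differentiableAt_const x₁).prodMk
      ((differentiableAt_const x₂).prodMk differentiableAt_id)))

lemma pdx_zero (g : ℝ → ℝ → ℝ → ℝ → ℝ) (c : ℝ → ℝ)
    (hg : ∀ t x₁ x₂ x₃, g t x₁ x₂ x₃ = c t) :
    ∀ t x₁ x₂ x₃ : ℝ, pd1 g t x₁ x₂ x₃ = 0 ∧ pd2 g t x₁ x₂ x₃ = 0 ∧ pd3 g t x₁ x₂ x₃ = 0 := by
  intro t x₁ x₂ x₃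
  refine ⟨?_, ?_, ?_⟩ <;> simp [pd1, pd2, pd3, hg]

/-- The obstruction of Remark 3.4: for any smooth ȳ, taking z¹ = F₁(t),
z² = F₂(t) and π = −F₁'x₁ − F₂'x₂ + F₁ȳ¹ + F₂ȳ², all four components of
L₀*(z,π) vanish identically, while (z¹,z²) ≠ (0,0) whenever (F₁,F₂) ≠ (0,0). -/
theorem stmt_18 (y1 y2 y3 : ℝ → ℝ → ℝ → ℝ → ℝ)
    (hy1 : ContDiff ℝ (⊤ : ℕ∞) fun p : ℝ × ℝ × ℝ × ℝ => y1 p.1 p.2.1 p.2.2.1 p.2.2.2)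
    (hy2 : ContDiff ℝ (⊤ : ℕ∞) fun p : ℝ × ℝ × ℝ × ℝ => y2 p.1 p.2.1 p.2.2.1 p.2.2.2)
    (hy3 : ContDiff ℝ (⊤ : ℕ∞) fun p : ℝ × ℝ × ℝ × ℝ => y3 p.1 p.2.1 p.2.2.1 p.2.2.2)
    (F₁ F₂ : ℝ → ℝ) (hF₁ : ContDiff ℝ (⊤ : ℕ∞) F₁) (hF₂ : ContDiff ℝ (⊤ : ℕ∞) F₂)
    (z1 z2 π : ℝ → ℝ → ℝ → ℝ → ℝ)
    (hz1 : ∀ t x₁ x₂ x₃, z1 t x₁ x₂ x₃ = F₁ t)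
    (hz2 : ∀ t x₁ x₂ x₃, z2 t x₁ x₂ x₃ = F₂ t)
    (hπ : ∀ t x₁ x₂ x₃, π t x₁ x₂ x₃ =
      -(deriv F₁ t) * x₁ - (deriv F₂ t) * x₂
        + F₁ t * y1 t x₁ x₂ x₃ + F₂ t * y2 t x₁ x₂ x₃) :
    (∀ t x₁ x₂ x₃ : ℝ,
      -- first component of L₀*(z,π)
      (-(pdT z1 t x₁ x₂ x₃)
        - (pd1 (pd1 z1) t x₁ x₂ x₃ + pd2 (pd2 z1) t x₁ x₂ x₃
            + pd3 (pd3 z1) t x₁ x₂ x₃)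
        - (y1 t x₁ x₂ x₃ * pd1 z1 t x₁ x₂ x₃
            + y2 t x₁ x₂ x₃ * pd2 z1 t x₁ x₂ x₃
            + y3 t x₁ x₂ x₃ * pd3 z1 t x₁ x₂ x₃)
        + pd1 y1 t x₁ x₂ x₃ * z1 t x₁ x₂ x₃
        + pd1 y2 t x₁ x₂ x₃ * z2 t x₁ x₂ x₃
        - pd1 π t x₁ x₂ x₃ = 0) ∧
      -- second component of L₀*(z,π)
      (-(pdT z2 t x₁ x₂ x₃)
        - (pd1 (pd1 z2) t x₁ x₂ x₃ + pd2 (pd2 z2) t x₁ x₂ x₃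
            + pd3 (pd3 z2) t x₁ x₂ x₃)
        - (y1 t x₁ x₂ x₃ * pd1 z2 t x₁ x₂ x₃
            + y2 t x₁ x₂ x₃ * pd2 z2 t x₁ x₂ x₃
            + y3 t x₁ x₂ x₃ * pd3 z2 t x₁ x₂ x₃)
        + pd2 y1 t x₁ x₂ x₃ * z1 t x₁ x₂ x₃
        + pd2 y2 t x₁ x₂ x₃ * z2 t x₁ x₂ x₃
        - pd2 π t x₁ x₂ x₃ = 0) ∧
      -- third component of L₀*(z,π)
      (pd3 y1 t x₁ x₂ x₃ * z1 t x₁ x₂ x₃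
        + pd3 y2 t x₁ x₂ x₃ * z2 t x₁ x₂ x₃
        - pd3 π t x₁ x₂ x₃ = 0) ∧
      -- fourth component of L₀*(z,π)
      (-(pd1 z1 t x₁ x₂ x₃) - pd2 z2 t x₁ x₂ x₃ = 0)) ∧
    ((F₁ ≠ 0 ∨ F₂ ≠ 0) →
      ¬ (∀ t x₁ x₂ x₃ : ℝ, z1 t x₁ x₂ x₃ = 0 ∧ z2 t x₁ x₂ x₃ = 0)) := by
  have P1 := pdx_zero z1 F₁ hz1
  have P2 := pdx_zero z2 F₂ hz2
  constructor
  · intro t x₁ x₂ x₃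
    have Q1 := pdx_zero (pd1 z1) (fun _ => 0) (fun a b c d => (P1 a b c d).1)
    have Q2 := pdx_zero (pd2 z1) (fun _ => 0) (fun a b c d => (P1 a b c d).2.1)
    have Q3 := pdx_zero (pd3 z1) (fun _ => 0) (fun a b c d => (P1 a b c d).2.2)
    have R1 := pdx_zero (pd1 z2) (fun _ => 0) (fun a b c d => (P2 a b c d).1)
    have R2 := pdx_zero (pd2 z2) (fun _ => 0) (fun a b c d => (P2 a b c d).2.1)
    have R3 := pdx_zero (pd3 z2) (fun _ => 0) (fun a b c d => (P2 a b c d).2.2)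
    have hT1 : pdT z1 t x₁ x₂ x₃ = deriv F₁ t := by simp [pdT, hz1]
    have hT2 : pdT z2 t x₁ x₂ x₃ = deriv F₂ t := by simp [pdT, hz2]
    have e1 : (fun s => π t s x₂ x₃)
        = fun s => (-(deriv F₁ t) * s - deriv F₂ t * x₂)
            + (F₁ t * y1 t s x₂ x₃ + F₂ t * y2 t s x₂ x₃) := by
      funext s; rw [hπ]; ring
    have e2 : (fun s => π t x₁ s x₃)
        = fun s => (-(deriv F₂ t) * s - deriv F₁ t * x₁)
            + (F₁ t * y1 t x₁ s x₃ + F₂ t * y2 t x₁ s x₃) := by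
      funext s; rw [hπ]; ring
    have e3 : (fun s => π t x₁ x₂ s)
        = fun s => (-(deriv F₁ t) * x₁ - deriv F₂ t * x₂)
            + (F₁ t * y1 t x₁ x₂ s + F₂ t * y2 t x₁ x₂ s) := by
      funext s; rw [hπ]; ring
    have hd1 : HasDerivAt (fun s => π t s x₂ x₃)
        (-(deriv F₁ t) * 1 + (F₁ t * pd1 y1 t x₁ x₂ x₃ + F₂ t * pd1 y2 t x₁ x₂ x₃)) x₁ := by
      rw [e1]
      exact (((hasDerivAt_id x₁).const_mul (-(deriv F₁ t))).sub_const _).add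
        ((((sd1 y1 hy1 t x₁ x₂ x₃).hasDerivAt).const_mul (F₁ t)).add
          (((sd1 y2 hy2 t x₁ x₂ x₃).hasDerivAt).const_mul (F₂ t)))
    have hd2 : HasDerivAt (fun s => π t x₁ s x₃)
        (-(deriv F₂ t) * 1 + (F₁ t * pd2 y1 t x₁ x₂ x₃ + F₂ t * pd2 y2 t x₁ x₂ x₃)) x₂ := by
      rw [e2]
      exact (((hasDerivAt_id x₂).const_mul (-(deriv F₂ t))).sub_const _).add
        ((((sd2 y1 hy1 t x₁ x₂ x₃).hasDerivAt).const_mul (F₁ t)).add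
          (((sd2 y2 hy2 t x₁ x₂ x₃).hasDerivAt).const_mul (F₂ t)))
    have hd3 : HasDerivAt (fun s => π t x₁ x₂ s)
        ((0 : ℝ) + (F₁ t * pd3 y1 t x₁ x₂ x₃ + F₂ t * pd3 y2 t x₁ x₂ x₃)) x₃ := by
      rw [e3]
      exact (hasDerivAt_const x₃ _).add
        ((((sd3 y1 hy1 t x₁ x₂ x₃).hasDerivAt).const_mul (F₁ t)).add
          (((sd3 y2 hy2 t x₁ x₂ x₃).hasDerivAt).const_mul (F₂ t)))
    have hπ1 : pd1 π t x₁ x₂ x₃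
        = -(deriv F₁ t) + F₁ t * pd1 y1 t x₁ x₂ x₃ + F₂ t * pd1 y2 t x₁ x₂ x₃ := by
      show deriv (fun s => π t s x₂ x₃) x₁ = _
      rw [hd1.deriv]; ring
    have hπ2 : pd2 π t x₁ x₂ x₃
        = -(deriv F₂ t) + F₁ t * pd2 y1 t x₁ x₂ x₃ + F₂ t * pd2 y2 t x₁ x₂ x₃ := by
      show deriv (fun s => π t x₁ s x₃) x₂ = _
      rw [hd2.deriv]; ring
    have hπ3 : pd3 π t x₁ x₂ x₃
        = F₁ t * pd3 y1 t x₁ x₂ x₃ + F₂ t * pd3 y2 t x₁ x₂ x₃ := by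
      show deriv (fun s => π t x₁ x₂ s) x₃ = _
      rw [hd3.deriv]; ring
    refine ⟨?_, ?_, ?_, ?_⟩
    · rw [hT1, (P1 t x₁ x₂ x₃).1, (P1 t x₁ x₂ x₃).2.1, (P1 t x₁ x₂ x₃).2.2,
        (Q1 t x₁ x₂ x₃).1, (Q2 t x₁ x₂ x₃).2.1, (Q3 t x₁ x₂ x₃).2.2,
        hπ1, hz1, hz2]
      ring
    · rw [hT2, (P2 t x₁ x₂ x₃).1, (P2 t x₁ x₂ x₃).2.1, (P2 t x₁ x₂ x₃).2.2,
        (R1 t x₁ x₂ x₃).1, (R2 t x₁ x₂ x₃).2.1, (R3 t x₁ x₂ x₃).2.2,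
        hπ2, hz1, hz2]
      ring
    · rw [hπ3, hz1, hz2]; ring
    · rw [(P1 t x₁ x₂ x₃).1, (P2 t x₁ x₂ x₃).2.1]; ring
  · rintro (h | h) hall
    · exact h (funext fun t => (hz1 t 0 0 0).symm.trans (hall t 0 0 0).1)
    · exact h (funext fun t => (hz2 t 0 0 0).symm.trans (hall t 0 0 0).2)
end
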